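/- Convergence of the forward sweep to a coordinate-wise minimum: in the discrete-time finite-state setting, suppose each control update chooses $u_t^{k+1} \in \arg\min$ with the tie-breaking rule that $u_t^{k+1} = u_t^k$ whenever $u_t^k$ is among the minimizers. If $J[u_{0:T-dt}^{k+1}] = J[u_{0:T-dt}^{k}]$, then $u_t^{k+1} = u_t^k$ for every $t$, and $u^{k+1}$ satisfies the coordinate-wise optimality condition: for every $t$, $u_t^{k+1}$ minimizes $u_t \mapsto J[u_{0:t-dt}^{k+1}, u_t, u_{t+dt:T-dt}^{k+1}]$. -/

import Mathlib

/-!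
The cost of any control splits at time `t` into the running cost before `t` plus the expected
cost-to-go from `t`. For the hybrid controls of the sweep, switching the control at time `t` from
`uk t` to `uk1 t` therefore changes `J` by exactly the change of the sweep objective, so
`J[uk1] - J[uk]` telescopes into a sum of these changes, each `≤ 0` by minimality. If `J` does not
decrease, every change vanishes, `uk t` is itself a minimizer, and the tie-breaking rule forces
`uk1 t = uk t`. Once `uk1 = uk`, the sweep objective at `t` is, up to the running cost before `t`,
the cost of `uk1` with its control at `t` replaced, which gives coordinate-wise optimality.
-/

open Finset

/-- Forward state distribution at time `t` induced by `p0` and the controls `u`. -/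
def pF {S U : Type} [Fintype S] (P : U → S → S → ℝ) (p0 : S → ℝ)
    (u : ℕ → U) : ℕ → S → ℝ
  | 0 => p0
  | (t+1) => fun s' => ∑ s : S, pF P p0 u t s * P (u t) s s'

/-- Backward value function, indexed by the number `k` of remaining steps. -/
def wAux {S U : Type} [Fintype S] (P : U → S → S → ℝ)
    (f : ℕ → S → U → ℝ) (g : S → ℝ) (N : ℕ) (u : ℕ → U) : ℕ → S → ℝ
  | 0 => g
  | (k+1) => fun s =>
      f (N - (k+1)) s (u (N - (k+1)))
        + ∑ s' : S, P (u (N - (k+1))) s s' * wAux P f g N u k s'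

/-- Backward value function at time `t`, with `w_N = g`. -/
def wVal {S U : Type} [Fintype S] (P : U → S → S → ℝ)
    (f : ℕ → S → U → ℝ) (g : S → ℝ) (N : ℕ) (u : ℕ → U) (t : ℕ) : S → ℝ :=
  wAux P f g N u (N - t)

/-- Total expected cost. -/
def Jval {S U : Type} [Fintype S] (P : U → S → S → ℝ) (p0 : S → ℝ)
    (f : ℕ → S → U → ℝ) (g : S → ℝ) (N : ℕ) (u : ℕ → U) : ℝ :=
  (∑ t ∈ Finset.range N, ∑ s : S, pF P p0 u t s * f t s (u t))
    + ∑ s : S, pF P p0 u N s * g s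

/-- Hybrid control sequence of the forward sweep: updated controls `uNew` before
time `t`, old controls `uOld` from time `t` onward. -/
def hyb {U : Type} (uOld uNew : ℕ → U) (t : ℕ) : ℕ → U :=
  fun τ => if τ < t then uNew τ else uOld τ

/-- The per-step sweep objective: the expected Hamiltonian at time `t` with
distribution from the updated controls and value from the old controls. -/
def sweepObj {S U : Type} [Fintype S] (P : U → S → S → ℝ) (p0 : S → ℝ)
    (f : ℕ → S → U → ℝ) (g : S → ℝ) (N : ℕ) (uk uk1 : ℕ → U) (t : ℕ)
    (v : U) : ℝ :=
  ∑ s : S, pF P p0 (hyb uk uk1 t) t s *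
    (f t s v + ∑ s' : S, P v s s' * wVal P f g N uk (t+1) s')

section

variable {S U : Type} [Fintype S] (P : U → S → S → ℝ) (p0 : S → ℝ)
  (f : ℕ → S → U → ℝ) (g : S → ℝ) (N : ℕ) (uk uk1 : ℕ → U)

def runningCost (u : ℕ → U) (t : ℕ) : ℝ :=
  ∑ τ ∈ range t, ∑ s : S, pF P p0 u τ s * f τ s (u τ)

lemma pF_congr {u v : ℕ → U} {t : ℕ} (h : ∀ τ < t, u τ = v τ) :
    pF P p0 u t = pF P p0 v t := by
  induction t with
  | zero => rfl
  | succ t ih =>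
    funext s'
    simp only [pF]
    rw [ih fun τ hτ => h τ (Nat.lt_succ_of_lt hτ), h t (Nat.lt_succ_self t)]

lemma runningCost_congr {u v : ℕ → U} {t : ℕ} (h : ∀ τ < t, u τ = v τ) :
    runningCost P p0 f u t = runningCost P p0 f v t := by
  refine sum_congr rfl fun τ hτ => ?_
  have hτt := mem_range.mp hτ
  rw [pF_congr P p0 fun σ hσ => h σ (hσ.trans hτt), h τ hτt]

lemma wAux_congr {u v : ℕ → U} {k : ℕ} (hk : k ≤ N)
    (h : ∀ τ, N - k ≤ τ → τ < N → u τ = v τ) :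
    wAux P f g N u k = wAux P f g N v k := by
  induction k with
  | zero => rfl
  | succ k ih =>
    funext s
    simp only [wAux]
    rw [h _ le_rfl (by omega), ih (by omega) fun τ h1 h2 => h τ (by omega) h2]

lemma wVal_congr {u v : ℕ → U} {t : ℕ} (h : ∀ τ, t ≤ τ → τ < N → u τ = v τ) :
    wVal P f g N u t = wVal P f g N v t :=
  wAux_congr P f g N (Nat.sub_le N t) fun τ h1 h2 => h τ (by omega) h2

lemma wVal_self (u : ℕ → U) : wVal P f g N u N = g := by
  simp only [wVal, Nat.sub_self, wAux]

lemma wVal_of_lt (u : ℕ → U) {t : ℕ} (ht : t < N) (s : S) :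
    wVal P f g N u t s = f t s (u t) + ∑ s' : S, P (u t) s s' * wVal P f g N u (t + 1) s' := by
  have hsteps : N - t = N - (t + 1) + 1 := by omega
  have htime : N - (N - (t + 1) + 1) = t := by omega
  simp only [wVal, hsteps, wAux, htime]

lemma Jval_congr {u v : ℕ → U} (h : ∀ τ < N, u τ = v τ) :
    Jval P p0 f g N u = Jval P p0 f g N v := by
  change runningCost P p0 f u N + _ = runningCost P p0 f v N + _
  rw [runningCost_congr P p0 f h, pF_congr P p0 h]

lemma sum_pF_succ_mul (u : ℕ → U) (t : ℕ) (φ : S → ℝ) :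
    ∑ s' : S, pF P p0 u (t + 1) s' * φ s' =
      ∑ s : S, pF P p0 u t s * ∑ s' : S, P (u t) s s' * φ s' := by
  simp only [pF, sum_mul, mul_sum]
  rw [sum_comm]
  simp only [mul_assoc]

lemma Jval_eq_runningCost_add_wVal (u : ℕ → U) {t : ℕ} (ht : t ≤ N) :
    Jval P p0 f g N u = runningCost P p0 f u t + ∑ s : S, pF P p0 u t s * wVal P f g N u t s := by
  induction ht using Nat.decreasingInduction with
  | self => rw [wVal_self]; rfl
  | of_succ t ht ih =>
    rw [ih, runningCost, sum_range_succ, sum_pF_succ_mul, ← runningCost, add_assoc,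
      ← sum_add_distrib]
    simp only [wVal_of_lt P f g N u ht, ← mul_add]

lemma Jval_update (u : ℕ → U) {t : ℕ} (ht : t < N) (v : U) :
    Jval P p0 f g N (Function.update u t v) = runningCost P p0 f u t +
      ∑ s : S, pF P p0 u t s * (f t s v + ∑ s' : S, P v s s' * wVal P f g N u (t + 1) s') := by
  have hbefore : ∀ τ < t, Function.update u t v τ = u τ := fun τ hτ =>
    Function.update_of_ne hτ.ne _ _
  rw [Jval_eq_runningCost_add_wVal P p0 f g N _ ht.le, runningCost_congr P p0 f hbefore,
    pF_congr P p0 hbefore]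
  congr 1
  refine sum_congr rfl fun s _ => ?_
  rw [wVal_of_lt P f g N _ ht, Function.update_self,
    wVal_congr P f g N (v := u) fun τ hτ _ => Function.update_of_ne (by omega) _ _]

lemma hyb_zero : hyb uk uk1 0 = uk :=
  funext fun _ => if_neg (Nat.not_lt_zero _)

lemma hyb_of_lt {t τ : ℕ} (h : τ < t) : hyb uk uk1 t τ = uk1 τ := if_pos h

lemma update_hyb_eq_hyb_succ (t : ℕ) :
    Function.update (hyb uk uk1 t) t (uk1 t) = hyb uk uk1 (t + 1) := by
  funext τ
  rcases lt_trichotomy τ t with h | rfl | h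
  · rw [Function.update_of_ne h.ne, hyb_of_lt _ _ h, hyb_of_lt _ _ (by omega)]
  · rw [Function.update_self, hyb_of_lt _ _ (Nat.lt_succ_self τ)]
  · rw [Function.update_of_ne h.ne']
    simp only [hyb, if_neg (by omega : ¬τ < t), if_neg (by omega : ¬τ < t + 1)]

lemma update_hyb_eq_hyb (t : ℕ) : Function.update (hyb uk uk1 t) t (uk t) = hyb uk uk1 t := by
  conv_rhs => rw [← Function.update_eq_self t (hyb uk uk1 t)]
  simp only [hyb, lt_irrefl, if_false]

lemma runningCost_add_sweepObj {t : ℕ} (ht : t < N) (v : U) :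
    runningCost P p0 f uk1 t + sweepObj P p0 f g N uk uk1 t v =
      Jval P p0 f g N (Function.update (hyb uk uk1 t) t v) := by
  rw [Jval_update P p0 f g N _ ht, runningCost_congr P p0 f fun τ hτ => hyb_of_lt uk uk1 hτ,
    wVal_congr P f g N (u := hyb uk uk1 t) (v := uk) fun τ hτ _ => if_neg (by omega)]
  rfl

lemma Jval_sub_Jval_eq_sum_sweepObj_sub :
    Jval P p0 f g N uk1 - Jval P p0 f g N uk =
      ∑ t ∈ range N,
        (sweepObj P p0 f g N uk uk1 t (uk1 t) - sweepObj P p0 f g N uk uk1 t (uk t)) := by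
  have hstep : ∀ t ∈ range N,
      sweepObj P p0 f g N uk uk1 t (uk1 t) - sweepObj P p0 f g N uk uk1 t (uk t) =
        Jval P p0 f g N (hyb uk uk1 (t + 1)) - Jval P p0 f g N (hyb uk uk1 t) := by
    intro t ht
    have ht := mem_range.mp ht
    rw [← update_hyb_eq_hyb_succ, ← runningCost_add_sweepObj P p0 f g N uk uk1 ht]
    conv_rhs => rw [← update_hyb_eq_hyb, ← runningCost_add_sweepObj P p0 f g N uk uk1 ht]
    ring
  rw [sum_congr rfl hstep, sum_range_sub (fun t => Jval P p0 f g N (hyb uk uk1 t)), hyb_zero,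
    Jval_congr P p0 f g N fun τ hτ => hyb_of_lt uk uk1 hτ]

variable {P p0 f g N uk uk1}

lemma eqOn_of_Jval_eq
    (hmin : ∀ t < N, ∀ v : U,
      sweepObj P p0 f g N uk uk1 t (uk1 t) ≤ sweepObj P p0 f g N uk uk1 t v)
    (htie : ∀ t < N,
      (∀ v : U, sweepObj P p0 f g N uk uk1 t (uk t) ≤ sweepObj P p0 f g N uk uk1 t v) →
      uk1 t = uk t)
    (heq : Jval P p0 f g N uk1 = Jval P p0 f g N uk) :
    ∀ t < N, uk1 t = uk t := by
  have hnonpos : ∀ t ∈ range N,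
      sweepObj P p0 f g N uk uk1 t (uk1 t) - sweepObj P p0 f g N uk uk1 t (uk t) ≤ 0 :=
    fun t ht => sub_nonpos.mpr (hmin t (mem_range.mp ht) (uk t))
  have hsum := Jval_sub_Jval_eq_sum_sweepObj_sub P p0 f g N uk uk1
  rw [heq, sub_self, eq_comm, sum_eq_zero_iff_of_nonpos hnonpos] at hsum
  exact fun t ht =>
    htie t ht fun v => (sub_eq_zero.mp (hsum t (mem_range.mpr ht))) ▸ hmin t ht v

lemma runningCost_add_sweepObj_of_eqOn (hfixed : ∀ t < N, uk1 t = uk t) {t : ℕ} (ht : t < N)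
    (v : U) :
    runningCost P p0 f uk1 t + sweepObj P p0 f g N uk uk1 t v =
      Jval P p0 f g N (Function.update uk1 t v) := by
  refine (runningCost_add_sweepObj P p0 f g N uk uk1 ht v).trans (Jval_congr P p0 f g N ?_)
  intro τ hτ
  by_cases h : τ = t
  · simp only [h, Function.update_self]
  · simp only [Function.update_of_ne h, hyb, hfixed τ hτ, ite_self]

lemma Jval_le_Jval_update_of_eqOn
    (hmin : ∀ t < N, ∀ v : U,
      sweepObj P p0 f g N uk uk1 t (uk1 t) ≤ sweepObj P p0 f g N uk uk1 t v)
    (hfixed : ∀ t < N, uk1 t = uk t) {t : ℕ} (ht : t < N) (v : U) :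
    Jval P p0 f g N uk1 ≤ Jval P p0 f g N (Function.update uk1 t v) := by
  calc Jval P p0 f g N uk1 = Jval P p0 f g N (Function.update uk1 t (uk1 t)) := by
        rw [Function.update_eq_self]
    _ ≤ Jval P p0 f g N (Function.update uk1 t v) := by
        rw [← runningCost_add_sweepObj_of_eqOn hfixed ht,
          ← runningCost_add_sweepObj_of_eqOn hfixed ht]
        gcongr
        exact hmin t ht v


end

theorem fbsm_convergence_to_coordinatewise_minimum_general
    {S U : Type} [Fintype S]
    (P : U → S → S → ℝ)
    (p0 : S → ℝ)
    (f : ℕ → S → U → ℝ) (g : S → ℝ) (N : ℕ)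
    (uk uk1 : ℕ → U)
    -- each updated control is a minimizer of the sweep objective
    (hmin : ∀ t < N, ∀ v : U,
      sweepObj P p0 f g N uk uk1 t (uk1 t) ≤ sweepObj P p0 f g N uk uk1 t v)
    -- tie-breaking rule: keep the old control whenever it is a minimizer
    (htie : ∀ t < N,
      (∀ v : U, sweepObj P p0 f g N uk uk1 t (uk t) ≤ sweepObj P p0 f g N uk uk1 t v) →
      uk1 t = uk t)
    -- if the objective did not decrease
    (heq : Jval P p0 f g N uk1 = Jval P p0 f g N uk) :
    (∀ t < N, uk1 t = uk t) ∧
    -- coordinate-wise optimality of the resulting control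
    (∀ t < N, ∀ v : U,
      Jval P p0 f g N uk1 ≤ Jval P p0 f g N (Function.update uk1 t v)) := by
  have hfixed := eqOn_of_Jval_eq hmin htie heq
  exact ⟨hfixed, fun t ht v => Jval_le_Jval_update_of_eqOn hmin hfixed ht v⟩

theorem fbsm_convergence_to_coordinatewise_minimum
    {S U : Type} [Fintype S]
    (P : U → S → S → ℝ)
    (hPnonneg : ∀ u s s', 0 ≤ P u s s')
    (hPsum : ∀ u s, ∑ s' : S, P u s s' = 1)
    (p0 : S → ℝ) (hp0nonneg : ∀ s, 0 ≤ p0 s) (hp0sum : ∑ s : S, p0 s = 1)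
    (f : ℕ → S → U → ℝ) (g : S → ℝ) (N : ℕ)
    (uk uk1 : ℕ → U)
    -- each updated control is a minimizer of the sweep objective
    (hmin : ∀ t < N, ∀ v : U,
      sweepObj P p0 f g N uk uk1 t (uk1 t) ≤ sweepObj P p0 f g N uk uk1 t v)
    -- tie-breaking rule: keep the old control whenever it is a minimizer
    (htie : ∀ t < N,
      (∀ v : U, sweepObj P p0 f g N uk uk1 t (uk t) ≤ sweepObj P p0 f g N uk uk1 t v) →
      uk1 t = uk t)
    -- if the objective did not decrease
    (heq : Jval P p0 f g N uk1 = Jval P p0 f g N uk) :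
    (∀ t < N, uk1 t = uk t) ∧
    -- coordinate-wise optimality of the resulting control
    (∀ t < N, ∀ v : U,
      Jval P p0 f g N uk1 ≤ Jval P p0 f g N (Function.update uk1 t v)) :=
  fbsm_convergence_to_coordinatewise_minimum_general P p0 f g N uk uk1 hmin htie heq
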